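/- Let S = {p₁, …, pₙ} ⊆ ℝ² be a set of n points in general position whose x-coordinates are strictly increasing in the index, and such that p₂, …, pₙ appear in counterclockwise order around p₁, i.e., for all 2 ≤ a < b ≤ n the triple (p₁, p_a, p_b) is positively oriented. If for some index a with 2 ≤ a ≤ n−5 the four consecutive triples (p_a, p_{a+1}, p_{a+2}), (p_{a+1}, p_{a+2}, p_{a+3}), (p_{a+2}, p_{a+3}, p_{a+4}) and (p_{a+3}, p_{a+4}, p_{a+5}) are all negatively oriented, then the six points {p_a, p_{a+1}, p_{a+2}, p_{a+3}, p_{a+4}, p_{a+5}} form a 6-hole of S. -/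

import Mathlib

/-- Orientation determinant of three points in the plane:
`det [[1,1,1],[pₓ,qₓ,rₓ],[p_y,q_y,r_y]]`.
The triple `(p,q,r)` is positively oriented iff `det3 p q r > 0`,
and negatively oriented iff `det3 p q r < 0`. -/
noncomputable def det3 (p q r : ℝ × ℝ) : ℝ :=
  Matrix.det !![(1:ℝ), 1, 1; p.1, q.1, r.1; p.2, q.2, r.2]

/-- A set of points in the plane is in general position if no three
distinct points of it are collinear. -/
def InGenPos (S : Set (ℝ × ℝ)) : Prop :=
  ∀ p ∈ S, ∀ q ∈ S, ∀ r ∈ S, p ≠ q → p ≠ r → q ≠ r →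
    ¬ Collinear ℝ ({p, q, r} : Set (ℝ × ℝ))

/-- `P` is a `k`-gon of `S`: a `k`-element subset of `S` in convex position,
i.e. every point of `P` is an extreme point of the convex hull of `P`. -/
def IsGon (k : ℕ) (S P : Set (ℝ × ℝ)) : Prop :=
  P ⊆ S ∧ P.Finite ∧ P.ncard = k ∧
    ∀ p ∈ P, p ∈ Set.extremePoints ℝ (convexHull ℝ P)

/-- `P` is a `k`-hole of `S`: a `k`-gon of `S` whose convex hull contains
no point of `S` other than the `k` points of `P`. -/
def IsHole (k : ℕ) (S P : Set (ℝ × ℝ)) : Prop :=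
  IsGon k S P ∧ ∀ q ∈ S, q ∈ convexHull ℝ P → q ∈ P

/-!
Sorted by x-coordinate and turning clockwise at each of their four inner vertices, the points
`p a, …, p (a + 5)` form a cup: for x-sorted points, negative orientation of `(p, q, r)` and
`(q, r, s)` propagates to `(p, q, s)` and `(p, r, s)`, so every triple of the six is negatively
oriented. Each point of a cup is then strictly separated from the others by a line (the chord
through its two neighbours, or a vertical line at the two ends), so the six points are in convex
position. No other point of `S` lies in their hull, because its x-coordinate falls outside
`[(p a).1, (p (a + 5)).1]`.
-/

open Set

theorem mem_extremePoints_convexHull_of_notMem_convexHull_sdiff {E : Type*} [AddCommGroup E]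
    [Module ℝ E] [TopologicalSpace E] [T2Space E] [IsTopologicalAddGroup E] [ContinuousSMul ℝ E]
    [LocallyConvexSpace ℝ E] {s : Set E} (hs : s.Finite) {x : E} (hxs : x ∈ s)
    (hx : x ∉ convexHull ℝ (s \ {x})) : x ∈ (convexHull ℝ s).extremePoints ℝ := by
  by_contra hext
  have hsub : (convexHull ℝ s).extremePoints ℝ ⊆ s \ {x} := fun y hy =>
    ⟨extremePoints_convexHull_subset hy, fun hyx => hext (hyx ▸ hy)⟩
  -- Krein–Milman: the hull of `s` is spanned by its extreme points, none of which is `x`.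
  have hhull : convexHull ℝ s ⊆ convexHull ℝ (s \ {x}) :=
    calc convexHull ℝ s
        = closure (convexHull ℝ ((convexHull ℝ s).extremePoints ℝ)) :=
          (closure_convexHull_extremePoints (hs.isCompact_convexHull ℝ) (convex_convexHull ℝ s)).symm
      _ ⊆ closure (convexHull ℝ (s \ {x})) := closure_mono (convexHull_mono hsub)
      _ = convexHull ℝ (s \ {x}) := (hs.sdiff.isClosed_convexHull ℝ).closure_eq
  exact hx (hhull (subset_convexHull ℝ s hxs))

theorem det3_eq (p q r : ℝ × ℝ) :
    det3 p q r = (q.1 - p.1) * (r.2 - p.2) - (r.1 - p.1) * (q.2 - p.2) := by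
  simp only [det3, Matrix.det_fin_three, Fin.isValue, Matrix.of_apply, Matrix.cons_val',
    Matrix.cons_val_zero, Matrix.cons_val_fin_one, Matrix.cons_val_one, one_mul, Matrix.cons_val]
  ring

theorem det3_rotate (p q r : ℝ × ℝ) : det3 q r p = det3 p q r := by
  simp only [det3_eq]; ring

theorem det3_swap_right (p q r : ℝ × ℝ) : det3 p r q = -det3 p q r := by
  simp only [det3_eq]; ring

theorem det3_self_left (u v : ℝ × ℝ) : det3 u v u = 0 := by
  simp only [det3_eq]; ring

theorem det3_self_right (u v : ℝ × ℝ) : det3 u v v = 0 := by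
  simp only [det3_eq]; ring

theorem convex_setOf_det3_nonpos (u v : ℝ × ℝ) : Convex ℝ {w | det3 u v w ≤ 0} := by
  intro x (hx : det3 u v x ≤ 0) y (hy : det3 u v y ≤ 0) s t hs ht hst
  have hcomb : det3 u v (s • x + t • y) = s * det3 u v x + t * det3 u v y := by
    simp only [det3_eq, Prod.fst_add, Prod.snd_add, Prod.smul_fst, Prod.smul_snd, smul_eq_mul]
    linear_combination (v.1 * u.2 - u.1 * v.2) * hst
  show det3 u v (s • x + t • y) ≤ 0
  rw [hcomb]
  exact add_nonpos (mul_nonpos_of_nonneg_of_nonpos hs hx) (mul_nonpos_of_nonneg_of_nonpos ht hy)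

section Orientation

variable {p q r s : ℝ × ℝ}

theorem det3_neg_omit_third (hpq : p.1 < q.1) (hqr : q.1 < r.1) (hrs : r.1 < s.1)
    (hpqr : det3 p q r < 0) (hqrs : det3 q r s < 0) : det3 p q s < 0 := by
  have key : (r.1 - q.1) * det3 p q s = (s.1 - q.1) * det3 p q r + (q.1 - p.1) * det3 q r s := by
    simp only [det3_eq]; ring
  have hrhs : (s.1 - q.1) * det3 p q r + (q.1 - p.1) * det3 q r s < 0 :=
    add_neg (mul_neg_of_pos_of_neg (by linarith) hpqr) (mul_neg_of_pos_of_neg (by linarith) hqrs)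
  exact neg_of_mul_neg_right (key ▸ hrhs) (by linarith)

theorem det3_neg_omit_second (hpq : p.1 < q.1) (hqr : q.1 < r.1) (hrs : r.1 < s.1)
    (hpqr : det3 p q r < 0) (hqrs : det3 q r s < 0) : det3 p r s < 0 := by
  have key : (r.1 - q.1) * det3 p r s = (s.1 - r.1) * det3 p q r + (r.1 - p.1) * det3 q r s := by
    simp only [det3_eq]; ring
  have hrhs : (s.1 - r.1) * det3 p q r + (r.1 - p.1) * det3 q r s < 0 :=
    add_neg (mul_neg_of_pos_of_neg (by linarith) hpqr) (mul_neg_of_pos_of_neg (by linarith) hqrs)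
  exact neg_of_mul_neg_right (key ▸ hrhs) (by linarith)

end Orientation

structure IsCup (p : ℕ → ℝ × ℝ) (a b : ℕ) : Prop where
  fst_strictMonoOn : StrictMonoOn (fun i => (p i).1) (Icc a b)
  det3_neg_consecutive : ∀ i, a ≤ i → i + 2 ≤ b → det3 (p i) (p (i + 1)) (p (i + 2)) < 0

namespace IsCup

variable {p : ℕ → ℝ × ℝ} {a b : ℕ}

theorem fst_lt (hp : IsCup p a b) {i j : ℕ} (hai : a ≤ i) (hij : i < j) (hjb : j ≤ b) :
    (p i).1 < (p j).1 :=
  hp.fst_strictMonoOn ⟨hai, by omega⟩ ⟨by omega, hjb⟩ hij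

theorem injOn (hp : IsCup p a b) : InjOn p (Icc a b) := fun _ hi _ hj hij =>
  hp.fst_strictMonoOn.injOn hi hj (congrArg Prod.fst hij)

theorem det3_neg (hp : IsCup p a b) {i j k : ℕ} (hai : a ≤ i) (hij : i < j) (hjk : j < k)
    (hkb : k ≤ b) : det3 (p i) (p j) (p k) < 0 := by
  by_cases hj : j = i + 1
  · subst hj
    by_cases hk : k = i + 2
    · subst hk
      exact hp.det3_neg_consecutive i hai hkb
    · exact det3_neg_omit_third (r := p (k - 1)) (hp.fst_lt hai hij (by omega))
        (hp.fst_lt (by omega) (by omega) (by omega)) (hp.fst_lt (by omega) (by omega) hkb)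
        (hp.det3_neg hai hij (by omega) (by omega))
        (by simpa only [Nat.sub_add_cancel (by omega : 1 ≤ k)] using
          hp.det3_neg (by omega) (by omega : i + 1 < k - 1) (by omega) hkb)
  · exact det3_neg_omit_second (q := p (i + 1)) (hp.fst_lt hai (by omega) (by omega))
      (hp.fst_lt (by omega) (by omega) (by omega)) (hp.fst_lt (by omega) hjk hkb)
      (hp.det3_neg hai (by omega) (by omega) (by omega))
      (hp.det3_neg (by omega) (by omega) hjk hkb)
termination_by k - i

theorem mem_extremePoints (hp : IsCup p a b) {j : ℕ} (hj : j ∈ Icc a b) :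
    p j ∈ (convexHull ℝ (p '' Icc a b)).extremePoints ℝ := by
  refine mem_extremePoints_convexHull_of_notMem_convexHull_sdiff ((finite_Icc a b).image p)
    (mem_image_of_mem p hj) ?_
  suffices ∃ H : Set (ℝ × ℝ), Convex ℝ H ∧ p j ∉ H ∧ ∀ i ∈ Icc a b, i ≠ j → p i ∈ H by
    obtain ⟨H, hH, hjH, hiH⟩ := this
    refine fun hmem => hjH (convexHull_min ?_ hH hmem)
    rintro _ ⟨⟨i, hi, rfl⟩, hij⟩
    exact hiH i hi fun h => hij (h ▸ rfl)
  obtain ⟨hj_lo, hj_hi⟩ := hj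
  rcases (by omega : j = a ∨ j = b ∨ a < j ∧ j < b) with rfl | rfl | ⟨haj, hjb⟩
  · refine ⟨{w | (p j).1 < w.1}, convex_halfSpace_gt (LinearMap.fst ℝ ℝ ℝ).isLinear _,
      lt_irrefl (p j).1, fun i hi hij => hp.fst_lt le_rfl (hi.1.lt_of_ne' hij) hi.2⟩
  · refine ⟨{w | w.1 < (p j).1}, convex_halfSpace_lt (LinearMap.fst ℝ ℝ ℝ).isLinear _,
      lt_irrefl (p j).1, fun i hi hij => hp.fst_lt hi.1 (hi.2.lt_of_ne hij) le_rfl⟩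
  · have hj1 : j - 1 + 1 = j := by omega
    have hj2 : j - 1 + 2 = j + 1 := by omega
    have hturn : det3 (p (j - 1)) (p j) (p (j + 1)) < 0 := by
      simpa only [hj1, hj2] using hp.det3_neg_consecutive (j - 1) (by omega) (by omega)
    refine ⟨{w | det3 (p (j - 1)) (p (j + 1)) w ≤ 0}, convex_setOf_det3_nonpos _ _, ?_, ?_⟩
    · show ¬det3 (p (j - 1)) (p (j + 1)) (p j) ≤ 0
      rw [det3_swap_right]
      linarith
    · intro i hi hij
      show det3 (p (j - 1)) (p (j + 1)) (p i) ≤ 0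
      rcases (by omega : i < j - 1 ∨ i = j - 1 ∨ i = j + 1 ∨ j + 1 < i) with hi' | rfl | rfl | hi'
      · rw [det3_rotate]
        exact (hp.det3_neg hi.1 hi' (by omega) (by omega)).le
      · rw [det3_self_left]
      · rw [det3_self_right]
      · exact (hp.det3_neg (by omega) (by omega) hi' hi.2).le

theorem isGon {S : Set (ℝ × ℝ)} (hp : IsCup p a b) (hS : p '' Icc a b ⊆ S) :
    IsGon (b + 1 - a) S (p '' Icc a b) :=
  ⟨hS, (finite_Icc a b).image p, by rw [hp.injOn.ncard_image, ncard_Icc_nat],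
    fun _ ⟨_, hj, hpj⟩ => hpj ▸ hp.mem_extremePoints hj⟩

theorem isHole {I : Set ℕ} (hp : IsCup p a b) (hI : StrictMonoOn (fun i => (p i).1) I)
    (hab : Icc a b ⊆ I) : IsHole (b + 1 - a) (p '' I) (p '' Icc a b) := by
  refine ⟨hp.isGon (image_mono hab), ?_⟩
  rintro _ ⟨j, hjI, rfl⟩ hhull
  by_contra hj
  have hj' : j ∉ Icc a b := fun h => hj (mem_image_of_mem p h)
  rcases (by simpa only [mem_Icc, not_and_or, not_le] using hj' : j < a ∨ b < j) with hja | hbj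
  · have hsub : convexHull ℝ (p '' Icc a b) ⊆ {w | (p j).1 < w.1} :=
      convexHull_min (image_subset_iff.2 fun i hi => hI hjI (hab hi) (hja.trans_le hi.1))
        (convex_halfSpace_gt (LinearMap.fst ℝ ℝ ℝ).isLinear _)
    exact lt_irrefl (p j).1 (hsub hhull)
  · have hsub : convexHull ℝ (p '' Icc a b) ⊆ {w | w.1 < (p j).1} :=
      convexHull_min (image_subset_iff.2 fun i hi => hI (hab hi) hjI (hi.2.trans_lt hbj))
        (convex_halfSpace_lt (LinearMap.fst ℝ ℝ ℝ).isLinear _)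
    exact lt_irrefl (p j).1 (hsub hhull)

end IsCup

theorem four_consecutive_negative_triples_give_6hole_general (n : ℕ) (p : ℕ → ℝ × ℝ)
    (hx : ∀ i j : ℕ, 1 ≤ i → i < j → j ≤ n → (p i).1 < (p j).1)
    (a : ℕ) (ha : 2 ≤ a) (han : a + 5 ≤ n)
    (h1 : det3 (p a) (p (a + 1)) (p (a + 2)) < 0)
    (h2 : det3 (p (a + 1)) (p (a + 2)) (p (a + 3)) < 0)
    (h3 : det3 (p (a + 2)) (p (a + 3)) (p (a + 4)) < 0)
    (h4 : det3 (p (a + 3)) (p (a + 4)) (p (a + 5)) < 0) :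
    IsHole 6 (p '' Set.Icc 1 n)
      {p a, p (a + 1), p (a + 2), p (a + 3), p (a + 4), p (a + 5)} := by
  have hsorted : StrictMonoOn (fun i => (p i).1) (Icc 1 n) := fun i hi j hj hij =>
    hx i j hi.1 hij hj.2
  have hrange : Icc a (a + 5) ⊆ Icc 1 n := Icc_subset_Icc (by omega) han
  have hcup : IsCup p a (a + 5) := by
    refine ⟨hsorted.mono hrange, fun i hai hib => ?_⟩
    rcases (by omega : i = a ∨ i = a + 1 ∨ i = a + 2 ∨ i = a + 3) with rfl | rfl | rfl | rfl
    exacts [h1, h2, h3, h4]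
  have hsix : ({p a, p (a + 1), p (a + 2), p (a + 3), p (a + 4), p (a + 5)} : Set (ℝ × ℝ)) =
      p '' Icc a (a + 5) := by
    rw [show Icc a (a + 5) = {a, a + 1, a + 2, a + 3, a + 4, a + 5} by
      ext i; simp only [mem_Icc, mem_insert_iff, mem_singleton_iff]; omega]
    simp only [image_insert_eq, image_singleton]
  rw [hsix, show 6 = a + 5 + 1 - a by omega]
  exact hcup.isHole hsorted hrange

/-- For x-sorted points `p 1, …, p n` in general position, counterclockwise
around `p 1`: if four consecutive triples starting at index `a` (with
`2 ≤ a ≤ n - 5`) are all negatively oriented, then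
`{p a, p (a+1), p (a+2), p (a+3), p (a+4), p (a+5)}` is a 6-hole. -/
theorem four_consecutive_negative_triples_give_6hole (n : ℕ) (p : ℕ → ℝ × ℝ)
    (hgp : InGenPos (p '' Set.Icc 1 n))
    (hx : ∀ i j : ℕ, 1 ≤ i → i < j → j ≤ n → (p i).1 < (p j).1)
    (hccw : ∀ a b : ℕ, 2 ≤ a → a < b → b ≤ n → det3 (p 1) (p a) (p b) > 0)
    (a : ℕ) (ha : 2 ≤ a) (han : a + 5 ≤ n)
    (h1 : det3 (p a) (p (a + 1)) (p (a + 2)) < 0)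
    (h2 : det3 (p (a + 1)) (p (a + 2)) (p (a + 3)) < 0)
    (h3 : det3 (p (a + 2)) (p (a + 3)) (p (a + 4)) < 0)
    (h4 : det3 (p (a + 3)) (p (a + 4)) (p (a + 5)) < 0) :
    IsHole 6 (p '' Set.Icc 1 n)
      {p a, p (a + 1), p (a + 2), p (a + 3), p (a + 4), p (a + 5)} :=
  four_consecutive_negative_triples_give_6hole_general n p hx a ha han h1 h2 h3 h4
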